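/- Let D(x) = Wx + b be an affine map on ℝⁿ with ‖W‖ (spectral norm) ≤ 1. Then D is nonexpansive, and for any convex g with L-Lipschitz gradient and τ > 0, the MS-RED operator G = ∇g + τ(I - D) is 1/(L+2τ)-cocoercive. -/

import Mathlib

/-!
`D x - D y = W (x - y)`, so `D` is nonexpansive, and for any nonexpansive `N` the map `id - N` is
`1/2`-cocoercive: `‖u - v‖² ≤ 2 ⟪u - v, u⟫` as soon as `‖v‖ ≤ ‖u‖`. The gradient of a convex
`g` with `L`-Lipschitz gradient is `1/L`-cocoercive (Baillon–Haddad): combine the gradient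
inequality with the descent lemma `g y ≤ g x + ⟪∇g x, y - x⟫ + L/2 ‖y - x‖²` at a gradient step.
Finally, a sum of a `1/α`- and a `1/β`-cocoercive map is `1/(α + β)`-cocoercive.
-/

open RealInnerProductSpace Set

theorem ContinuousLinearMap.lipschitzWith_one_add_const {E F : Type*} [NormedAddCommGroup E]
    [NormedSpace ℝ E] [NormedAddCommGroup F] [NormedSpace ℝ F] {W : E →L[ℝ] F} (hW : ‖W‖ ≤ 1)
    (b : F) :
    LipschitzWith 1 fun x => W x + b :=
  lipschitzWith_iff_norm_sub_le.2 fun x y => by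
    simpa [← map_sub] using W.le_of_opNorm_le hW (x - y)

section Cocoercive

variable {E : Type*} [NormedAddCommGroup E] [InnerProductSpace ℝ E]

def Cocoercive (β : ℝ) (T : E → E) : Prop :=
  ∀ x y, β * ‖T x - T y‖ ^ 2 ≤ ⟪T x - T y, x - y⟫

theorem Cocoercive.smul {β c : ℝ} {T : E → E} (hT : Cocoercive β T) (hc : 0 < c) :
    Cocoercive (β / c) fun x => c • T x := by
  intro x y
  rw [← smul_sub, norm_smul, real_inner_smul_left, mul_pow, Real.norm_eq_abs, sq_abs]
  calc β / c * (c ^ 2 * ‖T x - T y‖ ^ 2) = c * (β * ‖T x - T y‖ ^ 2) := by field_simp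
    _ ≤ c * ⟪T x - T y, x - y⟫ := mul_le_mul_of_nonneg_left (hT x y) hc.le

theorem Cocoercive.add {α β : ℝ} {S T : E → E} (hα : 0 < α) (hβ : 0 < β)
    (hS : Cocoercive (1 / α) S) (hT : Cocoercive (1 / β) T) :
    Cocoercive (1 / (α + β)) fun x => S x + T x := by
  intro x y
  rw [add_sub_add_comm, inner_add_left]
  set a := S x - S y
  set c := T x - T y
  -- `(‖a‖ + ‖c‖)²` is at most `(α + β) (‖a‖²/α + ‖c‖²/β)` with defect `(β‖a‖ - α‖c‖)² / (αβ)`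
  have hsplit : ‖a + c‖ ^ 2 ≤ (α + β) * (1 / α * ‖a‖ ^ 2 + 1 / β * ‖c‖ ^ 2) := by
    have htri := pow_le_pow_left₀ (norm_nonneg _) (norm_add_le a c) 2
    have hweighted : (‖a‖ + ‖c‖) ^ 2 ≤ (α + β) * (1 / α * ‖a‖ ^ 2 + 1 / β * ‖c‖ ^ 2) := by
      field_simp
      nlinarith [sq_nonneg (β * ‖a‖ - α * ‖c‖)]
    exact htri.trans hweighted
  calc 1 / (α + β) * ‖a + c‖ ^ 2 ≤ 1 / α * ‖a‖ ^ 2 + 1 / β * ‖c‖ ^ 2 := by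
        rw [div_mul_eq_mul_div, one_mul, div_le_iff₀ (by positivity), mul_comm]
        exact hsplit
    _ ≤ ⟪a, x - y⟫ + ⟪c, x - y⟫ := add_le_add (hS x y) (hT x y)

theorem LipschitzWith.cocoercive_id_sub {N : E → E} (hN : LipschitzWith 1 N) :
    Cocoercive (1 / 2) fun x => x - N x := by
  intro x y
  have hle : ‖N x - N y‖ ≤ ‖x - y‖ := by simpa using hN.norm_sub_le x y
  rw [sub_sub_sub_comm]
  generalize x - y = u at hle ⊢
  generalize N x - N y = v at hle ⊢
  rw [norm_sub_sq_real, inner_sub_left, real_inner_self_eq_norm_sq, real_inner_comm]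
  nlinarith [norm_nonneg v]

end Cocoercive

section Gradient

variable {F : Type*} [NormedAddCommGroup F] [InnerProductSpace ℝ F] [CompleteSpace F]
  {g : F → ℝ} {g' : F → F} {L : ℝ}

theorem HasGradientAt.hasDerivAt_comp_add_smul {x u : F} {t : ℝ} {d : F}
    (h : HasGradientAt g d (x + t • u)) :
    HasDerivAt (fun s : ℝ => g (x + s • u)) ⟪d, u⟫ t := by
  have hline : HasDerivAt (fun s : ℝ => x + s • u) u t := by
    simpa using ((hasDerivAt_id t).smul_const u).const_add x
  have h' := (hasGradientAt_iff_hasFDerivAt.mp h).comp_hasDerivAt t hline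
  simp only [InnerProductSpace.toDual_apply_apply] at h'
  exact h'

theorem ConvexOn.add_inner_le_of_hasGradientAt (hg : ConvexOn ℝ univ g) {x d : F}
    (hx : HasGradientAt g d x) (y : F) : g x + ⟪d, y - x⟫ ≤ g y := by
  have hline : ConvexOn ℝ univ fun t : ℝ => g (x + t • (y - x)) := by
    simpa [Function.comp_def, AffineMap.lineMap_apply, add_comm]
      using hg.comp_affineMap (AffineMap.lineMap x y)
  have hslope := hline.le_slope_of_hasDerivAt (mem_univ 0) (mem_univ 1) zero_lt_one
    (HasGradientAt.hasDerivAt_comp_add_smul (by simpa using hx))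
  simp only [slope_def_field, one_smul, add_sub_cancel, zero_smul, add_zero, sub_zero, div_one]
    at hslope
  linarith

theorem le_add_inner_add_of_lipschitz_gradient (hgrad : ∀ x, HasGradientAt g (g' x) x)
    (hlip : ∀ x y, ‖g' x - g' y‖ ≤ L * ‖x - y‖) (x y : F) :
    g y ≤ g x + ⟪g' x, y - x⟫ + L / 2 * ‖y - x‖ ^ 2 := by
  set u := y - x
  -- `g` along the segment minus its quadratic upper model has nonpositive derivative
  set φ : ℝ → ℝ := fun t => g (x + t • u) - t * ⟪g' x, u⟫ - L / 2 * t ^ 2 * ‖u‖ ^ 2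
  have hφ : ∀ t, HasDerivAt φ (⟪g' (x + t • u), u⟫ - ⟪g' x, u⟫ - L * t * ‖u‖ ^ 2) t := by
    intro t
    refine ((((hgrad (x + t • u)).hasDerivAt_comp_add_smul).sub
      ((hasDerivAt_id t).mul_const ⟪g' x, u⟫)).sub
      (((hasDerivAt_pow 2 t).const_mul (L / 2)).mul_const (‖u‖ ^ 2))).congr_deriv ?_
    ring
  have hanti : AntitoneOn φ (Ici 0) := by
    refine antitoneOn_of_hasDerivWithinAt_nonpos (convex_Ici 0)
      (fun t _ => (hφ t).continuousAt.continuousWithinAt) (fun t _ => (hφ t).hasDerivWithinAt) ?_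
    intro t ht
    rw [interior_Ici] at ht
    have hgap : ⟪g' (x + t • u) - g' x, u⟫ ≤ L * t * ‖u‖ ^ 2 := calc
      _ ≤ ‖g' (x + t • u) - g' x‖ * ‖u‖ := real_inner_le_norm _ _
      _ ≤ L * ‖t • u‖ * ‖u‖ := by gcongr; simpa using hlip (x + t • u) x
      _ = L * t * ‖u‖ ^ 2 := by rw [norm_smul, Real.norm_of_nonneg (le_of_lt ht)]; ring
    rw [inner_sub_left] at hgap
    linarith
  have h0 : φ 0 = g x := by simp [φ]
  have h1 : φ 1 = g y - ⟪g' x, u⟫ - L / 2 * ‖u‖ ^ 2 := by simp [φ, u]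
  linarith [hanti (mem_Ici.2 le_rfl) (mem_Ici.2 zero_le_one) zero_le_one]

theorem ConvexOn.add_inner_add_sq_gradient_sub_le (hg : ConvexOn ℝ univ g) (hL : 0 < L)
    (hgrad : ∀ x, HasGradientAt g (g' x) x) (hlip : ∀ x y, ‖g' x - g' y‖ ≤ L * ‖x - y‖)
    (x y : F) : g y + ⟪g' y, x - y⟫ + 1 / (2 * L) * ‖g' x - g' y‖ ^ 2 ≤ g x := by
  set d := g' x - g' y
  -- `x + v` is the gradient step from `x` for `g - ⟪g' y, ·⟫`, which is minimal at `y`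
  set v := -(L⁻¹ • d)
  have hlow := hg.add_inner_le_of_hasGradientAt (hgrad y) (x + v)
  have hup := le_add_inner_add_of_lipschitz_gradient hgrad hlip x (x + v)
  rw [add_sub_cancel_left] at hup
  rw [add_sub_right_comm, inner_add_right] at hlow
  have hdv : ⟪g' x, v⟫ - ⟪g' y, v⟫ = -(L⁻¹ * ‖d‖ ^ 2) := by
    rw [← inner_sub_left, inner_neg_right, real_inner_smul_right, real_inner_self_eq_norm_sq]
  have hv : L / 2 * ‖v‖ ^ 2 = L⁻¹ * ‖d‖ ^ 2 / 2 := by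
    rw [norm_neg, norm_smul, mul_pow, Real.norm_of_nonneg (inv_nonneg.2 hL.le)]
    field_simp
  have hd : 1 / (2 * L) * ‖d‖ ^ 2 = L⁻¹ * ‖d‖ ^ 2 / 2 := by ring
  linarith

theorem ConvexOn.cocoercive_gradient (hg : ConvexOn ℝ univ g) (hL : 0 < L)
    (hgrad : ∀ x, HasGradientAt g (g' x) x) (hlip : ∀ x y, ‖g' x - g' y‖ ≤ L * ‖x - y‖) :
    Cocoercive (1 / L) g' := by
  intro x y
  have hxy := hg.add_inner_add_sq_gradient_sub_le hL hgrad hlip x y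
  have hyx := hg.add_inner_add_sq_gradient_sub_le hL hgrad hlip y x
  rw [norm_sub_rev, ← neg_sub x y, inner_neg_right] at hyx
  rw [inner_sub_left]
  have hd : 1 / L * ‖g' x - g' y‖ ^ 2 = 2 * (1 / (2 * L) * ‖g' x - g' y‖ ^ 2) := by ring
  linarith

end Gradient

theorem affine_denoiser_msred {n : ℕ}
    (W : EuclideanSpace ℝ (Fin n) →L[ℝ] EuclideanSpace ℝ (Fin n))
    (b : EuclideanSpace ℝ (Fin n)) (hW : ‖W‖ ≤ 1)
    (D : EuclideanSpace ℝ (Fin n) → EuclideanSpace ℝ (Fin n))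
    (hDdef : ∀ x, D x = W x + b)
    (g : EuclideanSpace ℝ (Fin n) → ℝ)
    (g' : EuclideanSpace ℝ (Fin n) → EuclideanSpace ℝ (Fin n)) (L τ : ℝ)
    (hL : 0 < L) (hτ : 0 < τ)
    (hconv : ConvexOn ℝ Set.univ g)
    (hgrad : ∀ x, HasGradientAt g (g' x) x)
    (hlip : ∀ x y, ‖g' x - g' y‖ ≤ L * ‖x - y‖)
    (G : EuclideanSpace ℝ (Fin n) → EuclideanSpace ℝ (Fin n))
    (hG : ∀ x, G x = g' x + τ • (x - D x)) :
    (∀ x y, ‖D x - D y‖ ≤ ‖x - y‖) ∧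
      (∀ x y : EuclideanSpace ℝ (Fin n),
        (1 / (L + 2 * τ)) * ‖G x - G y‖ ^ 2 ≤ ⟪G x - G y, x - y⟫) := by
  have hD : LipschitzWith 1 D := by
    simpa only [← funext hDdef] using W.lipschitzWith_one_add_const hW b
  have hdenoiser : Cocoercive (1 / (2 * τ)) fun x => τ • (x - D x) := by
    simpa only [div_div] using hD.cocoercive_id_sub.smul hτ
  have hGco : Cocoercive (1 / (L + 2 * τ)) G := by
    simpa only [← funext hG] using
      (hconv.cocoercive_gradient hL hgrad hlip).add hL (by positivity) hdenoiser
  exact ⟨fun x y => by simpa using hD.norm_sub_le x y, hGco⟩
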